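/- Let p ≥ 7 be a prime with p ≡ 1 (mod 4), and let S(p) = { ∑ of the set of distinct residues {x^4 + cx^2 mod p : x ∈ Z/pZ} : c ∈ Z/pZ }. Then: S(p) = {x^2 mod p : x ∈ Z/pZ} if −1 ∈ S(p); S(p) = {x^4 mod p : x ∈ Z/pZ} if −1 ∉ S(p) and p ≡ 5 (mod 8); and S(p) = ({x^2 mod p} \ {x^4 mod p}) ∪ {0} if −1 ∉ S(p) and p ≡ 1 (mod 8). -/

import Mathlib

/-!
Write `T(c)` for the sum of the distinct values of `x⁴ + c x²` over a finite field with
`q ≡ 1 (mod 4)` elements. These are the values of `f t = t² + c t` at the squares `t`, and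
`f u = f t` iff `u ∈ {t, -c - t}`; so `2 T(c)` is twice the sum of `f` over the squares, minus its
sum over the squares `t` with `-c - t` also a square, plus its value at `-c/2` if that is a square.
The indicator of the nonzero squares is `(1 + t^((q-1)/2)) / 2`, which turns both sums into power
sums `∑ tᵏ`; these vanish for `0 < k < q - 1` (this is where `q > 5` is needed), and the one
surviving term gives `T(c) = -9c²/64` if `-c/2` is a square and `T(c) = -c²/64` otherwise.

With `i² = -1` and `c = 8 i b` this reads `T(c) = (3b)²` if `i b` is a square and `T(c) = b²`
otherwise. Hence `-1` is a value iff `3` is a square, in which case every square is a value; if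
not, the values are `0` and the squares of the `w` with `i w` a non-square, and which of these are
fourth powers depends on whether `i` is a square, that is on `(-1)^((q-1)/4)`.
-/

open Finset

theorem isSquare_mul_iff_of_isSquare_left {G₀ : Type*} [CommGroupWithZero G₀] {a b : G₀}
    (ha : IsSquare a) (ha0 : a ≠ 0) : IsSquare (a * b) ↔ IsSquare b :=
  ⟨fun hab => by simpa [ha0] using ha.inv.mul hab, ha.mul⟩

theorem isSquare_of_sq_eq_pow_four {R : Type*} [CommRing R] [NoZeroDivisors R] {w b : R}
    (hneg : IsSquare (-1 : R)) (h : w ^ 2 = b ^ 4) : IsSquare w := by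
  rcases sq_eq_sq_iff_eq_or_eq_neg.mp (h.trans (by ring) : w ^ 2 = (b ^ 2) ^ 2) with rfl | rfl
  · exact IsSquare.sq b
  · simpa using hneg.mul (IsSquare.sq b)

theorem zero_or_exists_sq_eq_iff_of_isSquare {K : Type*} [Field K] {i : K} (hi : i ^ 2 = -1)
    (hsq : IsSquare i) (y : K) : (y = 0 ∨ ∃ w : K, ¬IsSquare (i * w) ∧ w ^ 2 = y) ↔
      ((∃ s : K, s ^ 2 = y) ∧ ¬∃ b : K, b ^ 4 = y) ∨ y = 0 := by
  have hneg : IsSquare (-1 : K) := ⟨i, by rw [← hi, sq]⟩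
  have hi0 : i ≠ 0 := by rintro rfl; simp at hi
  simp only [isSquare_mul_iff_of_isSquare_left hsq hi0]
  constructor
  · rintro (rfl | ⟨w, hw, rfl⟩)
    · exact Or.inr rfl
    · exact Or.inl ⟨⟨w, rfl⟩, fun ⟨b, hb⟩ => hw (isSquare_of_sq_eq_pow_four hneg hb.symm)⟩
  · rintro (⟨⟨s, rfl⟩, h4⟩ | rfl)
    · refine Or.inr ⟨s, fun ⟨u, hu⟩ => h4 ⟨u, by rw [hu]; ring⟩, rfl⟩
    · exact Or.inl rfl

section FiberPairs

variable {α M : Type*} [DecidableEq α] [AddCommGroup M] [DecidableEq M]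

theorem two_nsmul_sum_image_of_fiber_pair (s : Finset α) (f : α → M) (σ : α → α)
    (hσ : Function.Involutive σ) (hf : ∀ t u, f u = f t ↔ u = t ∨ u = σ t) :
    2 • ∑ y ∈ s.image f, y =
      2 • ∑ t ∈ s, f t - ∑ t ∈ s with σ t ∈ s, f t + ∑ t ∈ s with σ t = t, f t := by
  rw [smul_sum, smul_sum, sum_filter, sum_filter, ← sum_sub_distrib, ← sum_add_distrib]
  -- the summand on the right adds up to `2 • f t` over the fibre `{t, σ t} ∩ s` of every `t ∈ s`
  refine sum_image' _ fun t ht => ?_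
  have hfib : ∀ u, u ∈ s ∧ f u = f t ↔ u = t ∨ (σ t ∈ s ∧ σ t ≠ t ∧ u = σ t) := by
    intro u
    rw [hf]
    grind
  by_cases hpair : σ t ∈ s ∧ σ t ≠ t
  · have : {u ∈ s | f u = f t} = {t, σ t} := by
      ext u; simp only [mem_filter, hfib, hpair, mem_insert, mem_singleton]; tauto
    have hft : f (σ t) = f t := (hf t (σ t)).mpr (Or.inr rfl)
    simp only [this, sum_pair (Ne.symm hpair.2), hσ t, ht, hpair.1, hpair.2, Ne.symm hpair.2,
      hft, if_true, if_false]
    abel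
  · have : {u ∈ s | f u = f t} = {t} := by
      ext u; simp only [mem_filter, hfib, mem_singleton]; tauto
    rw [this, sum_singleton]
    by_cases hfix : σ t = t
    · simp only [hfix, ht, if_true]; abel
    · rw [if_neg (by tauto), if_neg hfix]; abel

end FiberPairs

section FiniteField

variable {F : Type*} [Field F] [Fintype F]

theorem ringChar_ne_two_of_card_mod_four (hq : Fintype.card F % 4 = 1) : ringChar F ≠ 2 := by
  rw [Ne, FiniteField.even_card_iff_char_two]
  omega

theorem FiniteField.sum_pow_card_sub_one [DecidableEq F] :
    ∑ x : F, x ^ (Fintype.card F - 1) = -1 := by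
  calc ∑ x : F, x ^ (Fintype.card F - 1) = ∑ x : F, (1 - if x = 0 then 1 else 0) := by
        refine sum_congr rfl fun x _ => ?_
        split_ifs with hx
        · rw [hx, zero_pow (by have := Fintype.one_lt_card (α := F); omega), sub_self]
        · rw [FiniteField.pow_card_sub_one_eq_one x hx, sub_zero]
    _ = -1 := by simp [sum_sub_distrib]

theorem sum_pow_mul_sq_add_mul (c : F) {k : ℕ} (hk : k + 2 < Fintype.card F - 1) :
    ∑ t : F, t ^ k * (t ^ 2 + c * t) = 0 := by
  simp only [mul_add, ← pow_add, mul_left_comm _ c, ← pow_succ, sum_add_distrib, ← mul_sum,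
    FiniteField.sum_pow_lt_card_sub_one F _ hk,
    FiniteField.sum_pow_lt_card_sub_one F (k + 1) (by omega), mul_zero, add_zero]

theorem two_mul_sum_sq_sub_pow_half_add_one [DecidableEq F] (hodd : Fintype.card F % 2 = 1)
    (h3 : 3 < Fintype.card F) (d : F) :
    2 * ∑ u : F, (u ^ 2 - d) ^ (Fintype.card F / 2 + 1) = d := by
  set e := Fintype.card F / 2
  have h2e : ((2 * (e + 1) : ℕ) : F) = 1 := by
    rw [show 2 * (e + 1) = Fintype.card F + 1 by omega, Nat.cast_succ,
      FiniteField.cast_card_eq_zero, zero_add]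
  have hexpand : ∑ u : F, (u ^ 2 - d) ^ (e + 1) = ∑ j ∈ range (e + 2),
      (∑ u : F, u ^ (2 * j)) * (-d) ^ (e + 1 - j) * (e + 1).choose j := by
    simp only [sub_eq_add_neg, add_pow, ← pow_mul, sum_mul]
    exact sum_comm
  have htop : ∑ u : F, u ^ (2 * (e + 1)) = 0 := by
    simp only [show 2 * (e + 1) = Fintype.card F + 1 by omega, pow_succ, FiniteField.pow_card]
    simpa [sq] using FiniteField.sum_pow_lt_card_sub_one F 2 (by omega)
  have hmid : ∑ u : F, u ^ (2 * e) = -1 := by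
    rw [show 2 * e = Fintype.card F - 1 by omega, FiniteField.sum_pow_card_sub_one]
  have hlow : ∑ j ∈ range e, (∑ u : F, u ^ (2 * j)) * (-d) ^ (e + 1 - j) * (e + 1).choose j
      = 0 := sum_eq_zero fun j hj => by
    rw [FiniteField.sum_pow_lt_card_sub_one F _ (by simp at hj; omega), zero_mul, zero_mul]
  rw [hexpand, sum_range_succ, sum_range_succ, hlow, htop, hmid, Nat.choose_succ_self_right,
    show e + 1 - e = 1 by omega, pow_one]
  push_cast at h2e ⊢
  linear_combination d * h2e

theorem isSquare_sqrt_neg_one_iff (hq : Fintype.card F % 4 = 1) {i : F} (hi : i ^ 2 = -1) :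
    IsSquare i ↔ Fintype.card F % 8 = 1 := by
  have hF := ringChar_ne_two_of_card_mod_four hq
  have hi0 : i ≠ 0 := by rintro rfl; simp at hi
  rw [FiniteField.isSquare_iff hF hi0, show Fintype.card F / 2 = 2 * (Fintype.card F / 4) by omega,
    pow_mul, hi, neg_one_pow_eq_one_iff_even (Ring.neg_one_ne_one_of_char_ne_two hF),
    Nat.even_iff]
  omega

variable [DecidableEq F]

theorem one_add_quadraticChar_mul {t g : F} (hg : t = 0 → g = 0) :
    (1 + quadraticChar F t : F) * g = if IsSquare t then 2 * g else 0 := by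
  by_cases ht : t = 0
  · simp [ht, hg ht]
  split_ifs with hsq
  · rw [(quadraticChar_one_iff_isSquare ht).mpr hsq]
    norm_num
  · rw [quadraticChar_neg_one_iff_not_isSquare.mpr hsq]
    simp

theorem two_mul_sum_filter_isSquare (g : F → F) (hg : g 0 = 0) :
    2 * ∑ t with IsSquare t, g t = ∑ t, (1 + quadraticChar F t : F) * g t := by
  rw [mul_sum, sum_filter]
  exact sum_congr rfl fun t _ => (one_add_quadraticChar_mul fun ht => ht ▸ hg).symm

theorem four_mul_sum_filter_isSquare_and_isSquare_sub (g : F → F) (a : F) (hg0 : g 0 = 0)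
    (hga : g a = 0) :
    4 * ∑ t with IsSquare t ∧ IsSquare (a - t), g t =
      ∑ t, (1 + quadraticChar F t : F) * (1 + quadraticChar F (a - t) : F) * g t := by
  rw [mul_sum, sum_filter]
  refine sum_congr rfl fun t _ => ?_
  rw [mul_assoc, one_add_quadraticChar_mul fun (h : a - t = 0) => by rw [← sub_eq_zero.mp h, hga],
    one_add_quadraticChar_mul fun (h : t = 0) => by simp [h, hg0]]
  rw [ite_and]
  split_ifs <;> ring

theorem sum_filter_isSquare_sq_add_mul (hq : Fintype.card F % 4 = 1) (h5 : 5 < Fintype.card F)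
    (c : F) : ∑ t with IsSquare t, (t ^ 2 + c * t) = 0 := by
  have hF := ringChar_ne_two_of_card_mod_four hq
  have h0 := sum_pow_mul_sq_add_mul c (k := 0) (by omega)
  simp only [pow_zero, one_mul] at h0
  have h2 : 2 * ∑ t with IsSquare t, (t ^ 2 + c * t) = 0 := by
    rw [two_mul_sum_filter_isSquare _ (by ring)]
    simp only [quadraticChar_eq_pow_of_char_ne_two' hF, add_mul, one_mul, sum_add_distrib, h0,
      sum_pow_mul_sq_add_mul c (k := Fintype.card F / 2) (by omega), add_zero]
  exact (mul_eq_zero.mp h2).resolve_left (Ring.two_ne_zero hF)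

theorem thirty_two_mul_sum_filter_isSquare_and_isSquare_neg_sub (hq : Fintype.card F % 4 = 1)
    (h5 : 5 < Fintype.card F) (c : F) :
    32 * ∑ t with IsSquare t ∧ IsSquare (-c - t), (t ^ 2 + c * t) = c ^ 2 := by
  have hF := ringChar_ne_two_of_card_mod_four hq
  set e := Fintype.card F / 2
  have hχ : ∀ t : F, (quadraticChar F t : F) = t ^ e := quadraticChar_eq_pow_of_char_ne_two' hF
  have he : Even e := by rw [Nat.even_iff]; omega
  have h2 : (2 : F) ≠ 0 := Ring.two_ne_zero hF
  have h4 : (4 : F) ≠ 0 := by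
    rw [show (4 : F) = 2 * 2 by norm_num]; exact mul_ne_zero h2 h2
  have h0 := sum_pow_mul_sq_add_mul c (k := 0) (by omega)
  simp only [pow_zero, one_mul] at h0
  have h1 := sum_pow_mul_sq_add_mul c (k := e) (by omega)
  have hreflect : ∑ t : F, (-c - t) ^ e * (t ^ 2 + c * t) = 0 := by
    rw [← h1]
    exact Fintype.sum_equiv (Equiv.subLeft (-c)) _ _ fun t => by
      simp only [Equiv.subLeft_apply]; ring
  have hshift : ∑ t : F, (t ^ 2 + c * t) ^ (e + 1) = ∑ u : F, (u ^ 2 - c ^ 2 / 4) ^ (e + 1) :=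
    Fintype.sum_equiv (Equiv.addRight (c / 2)) _ _ fun t => by
      simp only [Equiv.coe_addRight]; congr 1; field_simp; ring
  have hcenter : 2 * ∑ u : F, (u ^ 2 - c ^ 2 / 4) ^ (e + 1) = c ^ 2 / 4 :=
    two_mul_sum_sq_sub_pow_half_add_one (by omega) (by omega) _
  have hexpand : ∀ t : F, (1 + t ^ e) * (1 + (-c - t) ^ e) * (t ^ 2 + c * t) =
      (t ^ 2 + c * t) + t ^ e * (t ^ 2 + c * t) + (-c - t) ^ e * (t ^ 2 + c * t)
        + (t ^ 2 + c * t) ^ (e + 1) := fun t => by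
    have : t ^ e * (-c - t) ^ e = (t ^ 2 + c * t) ^ e := by
      rw [← mul_pow, show t * (-c - t) = -(t ^ 2 + c * t) by ring, he.neg_pow]
    linear_combination (t ^ 2 + c * t) * this
  calc 32 * ∑ t with IsSquare t ∧ IsSquare (-c - t), (t ^ 2 + c * t)
      = 8 * ∑ t : F, (1 + t ^ e) * (1 + (-c - t) ^ e) * (t ^ 2 + c * t) := by
        rw [show (32 : F) = 8 * 4 by norm_num, mul_assoc,
          four_mul_sum_filter_isSquare_and_isSquare_sub _ _ (by ring) (by ring)]
        simp only [hχ]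
    _ = 4 * (2 * ∑ u : F, (u ^ 2 - c ^ 2 / 4) ^ (e + 1)) := by
        simp only [hexpand, sum_add_distrib, h0, h1, hreflect, hshift]
        ring
    _ = c ^ 2 := by rw [hcenter]; field_simp

theorem four_mul_sum_filter_isSquare_and_neg_sub_eq_self (h2 : (2 : F) ≠ 0) (c : F) :
    4 * ∑ t with IsSquare t ∧ -c - t = t, (t ^ 2 + c * t) =
      if IsSquare (-c / 2) then -c ^ 2 else 0 := by
  rw [sum_filter, mul_sum]
  calc ∑ t, 4 * (if IsSquare t ∧ -c - t = t then t ^ 2 + c * t else 0)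
      = ∑ t, if t = -c / 2 then (if IsSquare t then 4 * (t ^ 2 + c * t) else 0) else 0 := by
        refine sum_congr rfl fun t _ => ?_
        have : -c - t = t ↔ t = -c / 2 := by
          rw [eq_div_iff h2]; constructor <;> intro h <;> linear_combination -h
        rw [mul_ite, mul_zero, ← ite_and]
        exact if_congr (by rw [this, and_comm]) rfl rfl
    _ = _ := by
        rw [Fintype.sum_ite_eq']
        split_ifs
        · field_simp; ring
        · rfl

theorem sum_image_quartic (hq : Fintype.card F % 4 = 1) (h5 : 5 < Fintype.card F) (c : F) :
    (univ.image fun x : F => x ^ 4 + c * x ^ 2).sum id =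
      -(if IsSquare (-c / 2) then 9 else 1) * c ^ 2 / 64 := by
  have h2 : (2 : F) ≠ 0 := Ring.two_ne_zero (ringChar_ne_two_of_card_mod_four hq)
  set f : F → F := fun t => t ^ 2 + c * t with hf
  have himage : (univ.image fun x : F => x ^ 4 + c * x ^ 2) =
      image f ({t | IsSquare t} : Finset F) := by
    ext y
    simp only [mem_image, mem_filter, mem_univ, true_and, isSquare_iff_exists_sq, hf]
    constructor
    · rintro ⟨x, rfl⟩; exact ⟨x ^ 2, ⟨x, rfl⟩, by ring⟩
    · rintro ⟨_, ⟨x, rfl⟩, rfl⟩; exact ⟨x, by ring⟩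
  have hfiber : ∀ t u, f u = f t ↔ u = t ∨ u = -c - t := fun t u => by
    rw [← sub_eq_zero, show f u - f t = (u - t) * (u - (-c - t)) by ring, mul_eq_zero,
      sub_eq_zero, sub_eq_zero]
  have hpair := two_nsmul_sum_image_of_fiber_pair ({t | IsSquare t} : Finset F) f (fun t => -c - t)
    (fun t => by ring) hfiber
  simp only [filter_filter, mem_filter, mem_univ, true_and] at hpair
  have hQ : ∑ t with IsSquare t, f t = 0 := sum_filter_isSquare_sq_add_mul hq h5 c
  have hD : 32 * ∑ t with IsSquare t ∧ IsSquare (-c - t), f t = c ^ 2 :=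
    thirty_two_mul_sum_filter_isSquare_and_isSquare_neg_sub hq h5 c
  have hdiag : 4 * ∑ t with IsSquare t ∧ -c - t = t, f t =
      if IsSquare (-c / 2) then -c ^ 2 else 0 :=
    four_mul_sum_filter_isSquare_and_neg_sub_eq_self h2 c
  have h64 : (64 : F) ≠ 0 := by rw [show (64 : F) = 2 ^ 6 by norm_num]; exact pow_ne_zero 6 h2
  rw [himage, eq_div_iff h64]
  change (∑ y ∈ _, y) * 64 = _
  rw [hQ, two_nsmul, smul_zero, zero_sub] at hpair
  split_ifs at hdiag ⊢ <;> linear_combination 32 * hpair - hD + 8 * hdiag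

theorem mem_image_sum_image_quartic_iff (hq : Fintype.card F % 4 = 1) (h5 : 5 < Fintype.card F)
    {i : F} (hi : i ^ 2 = -1) (y : F) :
    y ∈ univ.image (fun c : F => (univ.image fun x : F => x ^ 4 + c * x ^ 2).sum id) ↔
      ∃ b : F, (if IsSquare (i * b) then 3 * b else b) ^ 2 = y := by
  have h2 : (2 : F) ≠ 0 := Ring.two_ne_zero (ringChar_ne_two_of_card_mod_four hq)
  have hi0 : i ≠ 0 := by rintro rfl; simp at hi
  have h8i : 8 * i ≠ 0 := by rw [show (8 : F) = 2 * 2 * 2 by norm_num]; simp [h2, hi0]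
  have h64 : (64 : F) ≠ 0 := by rw [show (64 : F) = 2 ^ 6 by norm_num]; exact pow_ne_zero 6 h2
  have hvalue : ∀ b : F, -(if IsSquare (-(8 * i * b) / 2) then 9 else 1) * (8 * i * b) ^ 2 / 64 =
      (if IsSquare (i * b) then 3 * b else b) ^ 2 := fun b => by
    have : -(8 * i * b) / 2 = (2 * i) ^ 2 * (i * b) := by
      rw [div_eq_iff h2]; linear_combination (-8 * i * b) * hi
    simp only [this,
      isSquare_mul_iff_of_isSquare_left (IsSquare.sq _) (pow_ne_zero 2 (mul_ne_zero h2 hi0))]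
    rw [div_eq_iff h64]
    split_ifs
    · linear_combination (-576 * b ^ 2) * hi
    · linear_combination (-64 * b ^ 2) * hi
  simp only [mem_image, mem_univ, true_and, sum_image_quartic hq h5]
  constructor
  · rintro ⟨c, rfl⟩
    obtain ⟨b, rfl⟩ : ∃ b, c = 8 * i * b := ⟨c / (8 * i), (mul_div_cancel₀ c h8i).symm⟩
    exact ⟨b, (hvalue b).symm⟩
  · rintro ⟨b, rfl⟩
    exact ⟨8 * i * b, hvalue b⟩

theorem exists_sq_eq_neg_one_iff {i : F} (hi : i ^ 2 = -1) :
    (∃ b : F, (if IsSquare (i * b) then 3 * b else b) ^ 2 = -1) ↔ quadraticChar F 3 = 1 := by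
  have hneg : IsSquare (-1 : F) := ⟨i, by rw [← hi, sq]⟩
  constructor
  · rintro ⟨b, hb⟩
    split_ifs at hb with hib
    · have h1 : (i * b) * 3 = 1 ∨ (i * b) * 3 = -1 := by
        rcases sq_eq_sq_iff_eq_or_eq_neg.mp (hb.trans hi.symm) with h | h
        · right; linear_combination i * h + hi
        · left; linear_combination i * h - hi
      have hib0 : i * b ≠ 0 := by rintro h0; rcases h1 with h1 | h1 <;> simp [h0] at h1
      have hχ : quadraticChar F (i * b * 3) = 1 := by
        rcases h1 with h1 | h1 <;> rw [h1]
        · exact map_one _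
        · exact (quadraticChar_one_iff_isSquare (by simp)).mpr hneg
      rwa [map_mul, (quadraticChar_one_iff_isSquare hib0).mpr hib, one_mul] at hχ
    · exfalso
      apply hib
      rcases sq_eq_sq_iff_eq_or_eq_neg.mp (hb.trans hi.symm) with h | h <;> rw [h]
      · rwa [← sq, hi]
      · exact ⟨1, by linear_combination -hi⟩
  · intro h3
    have h30 : (3 : F) ≠ 0 := fun h0 => by simp [h0] at h3
    have hsq3 : IsSquare (3 : F) := (quadraticChar_one_iff_isSquare h30).mp h3
    refine ⟨i / 3, ?_⟩
    have : IsSquare (i * (i / 3)) := by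
      rw [show i * (i / 3) = -1 * 3⁻¹ by rw [← hi]; ring]
      exact hneg.mul hsq3.inv
    rw [if_pos this, mul_div_cancel₀ _ h30, hi]

theorem exists_sq_eq_iff_of_quadraticChar_three_eq_one {i : F} (h3 : quadraticChar F 3 = 1)
    (y : F) :
    (∃ b : F, (if IsSquare (i * b) then 3 * b else b) ^ 2 = y) ↔ ∃ s : F, s ^ 2 = y := by
  refine ⟨fun ⟨b, hb⟩ => ⟨_, hb⟩, fun ⟨s, hs⟩ => ?_⟩
  by_cases his : IsSquare (i * s)
  · have h30 : (3 : F) ≠ 0 := fun h0 => by simp [h0] at h3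
    have : IsSquare (i * (s / 3)) := by
      rw [mul_div_assoc', div_eq_mul_inv]
      exact his.mul ((quadraticChar_one_iff_isSquare h30).mp h3).inv
    exact ⟨s / 3, by rw [if_pos this, mul_div_cancel₀ _ h30, hs]⟩
  · exact ⟨s, by rw [if_neg his, hs]⟩

theorem exists_sq_eq_iff_of_quadraticChar_three_ne_one {i : F} (hi0 : i ≠ 0)
    (h3 : quadraticChar F 3 ≠ 1) (y : F) :
    (∃ b : F, (if IsSquare (i * b) then 3 * b else b) ^ 2 = y) ↔
      y = 0 ∨ ∃ w : F, ¬IsSquare (i * w) ∧ w ^ 2 = y := by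
  constructor
  · rintro ⟨b, rfl⟩
    split_ifs with hib
    · by_cases h0 : 3 * b = 0
      · left; rw [h0, sq, zero_mul]
      right
      refine ⟨3 * b, ?_, rfl⟩
      have hib0 : i * b ≠ 0 := mul_ne_zero hi0 (right_ne_zero_of_mul h0)
      rw [← quadraticChar_neg_one_iff_not_isSquare, show i * (3 * b) = 3 * (i * b) by ring,
        map_mul, (quadraticChar_one_iff_isSquare hib0).mpr hib, mul_one]
      exact (quadraticChar_eq_neg_one_iff_not_one (left_ne_zero_of_mul h0)).mpr h3
    · exact Or.inr ⟨b, hib, rfl⟩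
  · rintro (rfl | ⟨w, hw, rfl⟩)
    · exact ⟨0, by simp⟩
    · exact ⟨w, by rw [if_neg hw]⟩

theorem zero_or_exists_sq_eq_iff_of_not_isSquare {i : F} (hi : ¬IsSquare i) (y : F) :
    (y = 0 ∨ ∃ w : F, ¬IsSquare (i * w) ∧ w ^ 2 = y) ↔ ∃ b : F, b ^ 4 = y := by
  constructor
  · rintro (rfl | ⟨w, hw, rfl⟩)
    · exact ⟨0, by ring⟩
    · have hw0 : w ≠ 0 := by rintro rfl; simp at hw
      rw [← quadraticChar_neg_one_iff_not_isSquare] at hi hw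
      rw [map_mul, hi, neg_mul, one_mul, neg_inj, quadraticChar_one_iff_isSquare hw0] at hw
      obtain ⟨u, rfl⟩ := hw
      exact ⟨u, by ring⟩
  · rintro ⟨b, rfl⟩
    by_cases hb : b = 0
    · left; simp [hb]
    · refine Or.inr ⟨b ^ 2, fun h => hi ?_, by ring⟩
      rwa [mul_comm, isSquare_mul_iff_of_isSquare_left (IsSquare.sq b) (pow_ne_zero 2 hb)] at h

end FiniteField

theorem set_of_sums_one_mod_four (p : ℕ) [Fact p.Prime] (hp7 : 7 ≤ p) (hp : p % 4 = 1) :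
    let S : Finset (ZMod p) := Finset.univ.image (fun c : ZMod p =>
      (Finset.univ.image (fun x : ZMod p => x ^ 4 + c * x ^ 2)).sum id)
    ((-1 : ZMod p) ∈ S → S = Finset.univ.image (fun x : ZMod p => x ^ 2)) ∧
    ((-1 : ZMod p) ∉ S → p % 8 = 5 →
      S = Finset.univ.image (fun x : ZMod p => x ^ 4)) ∧
    ((-1 : ZMod p) ∉ S → p % 8 = 1 →
      S = (Finset.univ.image (fun x : ZMod p => x ^ 2) \
            Finset.univ.image (fun x : ZMod p => x ^ 4)) ∪ {0}) := by
  intro S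
  have hq : Fintype.card (ZMod p) % 4 = 1 := by rwa [ZMod.card]
  have h5 : 5 < Fintype.card (ZMod p) := by rw [ZMod.card]; omega
  obtain ⟨i, hi⟩ : ∃ i : ZMod p, i ^ 2 = -1 := by
    obtain ⟨i, hi⟩ :=
      FiniteField.isSquare_neg_one_iff.mpr (by omega : Fintype.card (ZMod p) % 4 ≠ 3)
    exact ⟨i, by rw [hi, sq]⟩
  have hi0 : i ≠ 0 := by rintro rfl; simp at hi
  have hS (y : ZMod p) : y ∈ S ↔ _ := mem_image_sum_image_quartic_iff hq h5 hi y
  have h3 : quadraticChar (ZMod p) 3 = 1 ↔ -1 ∈ S := by rw [hS, exists_sq_eq_neg_one_iff hi]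
  have hi8 : IsSquare i ↔ p % 8 = 1 := by rw [isSquare_sqrt_neg_one_iff hq hi, ZMod.card]
  refine ⟨fun hmem => ?_, fun hmem h8 => ?_, fun hmem h8 => ?_⟩ <;> ext y <;>
    simp only [hS, mem_image, mem_univ, true_and, mem_union, mem_sdiff, mem_singleton]
  · exact exists_sq_eq_iff_of_quadraticChar_three_eq_one (h3.mpr hmem) y
  · rw [exists_sq_eq_iff_of_quadraticChar_three_ne_one hi0 (mt h3.mp hmem),
      zero_or_exists_sq_eq_iff_of_not_isSquare (by rw [hi8]; omega)]
  · rw [exists_sq_eq_iff_of_quadraticChar_three_ne_one hi0 (mt h3.mp hmem),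
      zero_or_exists_sq_eq_iff_of_isSquare hi (hi8.mpr h8)]
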